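/- For every n ∈ ℕ with n ≥ 1, every (a_j)_{1≤j≤n} ∈ ℂ^n and every (γ_{j,k})_{1≤j<k≤n} ∈ ℝ^{n(n−1)/2}: inf over v ∈ ℂ^{2^n} with ‖v‖ = 1 of ‖M_n((a_j)_{1≤j≤n},(γ_{j,k})_{1≤j<k≤n})·v‖² is at least Σ_{j=1}^{n}|a_j|² − [n ≥ 2]·Σ_{m=2}^{n} |a_m|·Σ_{j=1}^{m−1} |1 + e^{iγ_{j,m}}|·|a_j|, where [n ≥ 2] is 1 if n ≥ 2 and 0 otherwise. -/

import Mathlib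

open Matrix

noncomputable def Umat : (n : ℕ) → (Fin n → ℝ) → Matrix (Fin (2 ^ n)) (Fin (2 ^ n)) ℂ
  | 0, _ => 1
  | n + 1, ξ =>
      (Matrix.reindex (finSumFinEquiv.trans (finCongr (by rw [pow_succ, mul_two])))
        (finSumFinEquiv.trans (finCongr (by rw [pow_succ, mul_two]))))
        (Matrix.fromBlocks (Umat n fun j => ξ j.castSucc) 0 0
          (Complex.exp (Complex.I * (ξ (Fin.last n) : ℂ)) • Umat n fun j => ξ j.castSucc))

/-- The recursively defined hopping matrix `M_n((a_j), (γ_{j,k}))`; only the entries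
`γ j k` with `j < k` are relevant. -/
noncomputable def Mmat : (n : ℕ) → (Fin n → ℂ) → (Fin n → Fin n → ℝ) →
    Matrix (Fin (2 ^ n)) (Fin (2 ^ n)) ℂ
  | 0, _, _ => 0
  | n + 1, a, γ =>
      (Matrix.reindex (finSumFinEquiv.trans (finCongr (by rw [pow_succ, mul_two])))
        (finSumFinEquiv.trans (finCongr (by rw [pow_succ, mul_two]))))
        (Matrix.fromBlocks
          (Mmat n (fun j => a j.castSucc) fun j k => γ j.castSucc k.castSucc)
          (a (Fin.last n) • Umat n fun j => γ j.castSucc (Fin.last n))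
          ((starRingEnd ℂ) (a (Fin.last n)) • (Umat n fun j => γ j.castSucc (Fin.last n))ᴴ)
          (Mmat n (fun j => a j.castSucc) fun j k => γ j.castSucc k.castSucc))

/-!
Write `M_{n+1}` in blocks as `[[M, a V], [ā V*, M]]` with `M = M_n` Hermitian and `V` unitary.
For `v = (x, y)`, expanding `‖M_{n+1} v‖²` gives `‖M x‖² + ‖M y‖² + |a|² ‖v‖²` plus the cross
term `2 Re (a ⟪x, (M V + V M) y⟫)`, so everything hinges on bounding the anticommutator of `M_n`
with `U_n(ξ)`. The `U_n` are commuting unitaries with `U_n(ξ) U_n(ζ) = U_n(ξ + ζ)`, hence the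
anticommutator of `M_{n+1}` and `U_{n+1}(ξ)` is again block shaped: its diagonal blocks are
`{M_n, U_n}` (up to a phase) and its off-diagonal blocks are `a (1 + e^{iξ_{n+1}})` times unitaries.
By induction its norm is at most `∑ j, |1 + e^{iξ_j}| |a_j|`, and together with
`2 ‖x‖ ‖y‖ ≤ ‖v‖²` this yields the recursion for the lower bound.
-/

def finSumFinEquivPow (n : ℕ) : Fin (2 ^ n) ⊕ Fin (2 ^ n) ≃ Fin (2 ^ (n + 1)) :=
  finSumFinEquiv.trans (finCongr (by rw [pow_succ, mul_two]))

section BlockVectors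

variable {𝕜 ι κ : Type*} (e : ι ⊕ ι ≃ κ)

def blockVec (x y : EuclideanSpace 𝕜 ι) : EuclideanSpace 𝕜 κ :=
  WithLp.toLp 2 (Sum.elim x.ofLp y.ofLp ∘ e.symm)

theorem exists_eq_blockVec (v : EuclideanSpace 𝕜 κ) : ∃ x y, v = blockVec e x y :=
  ⟨WithLp.toLp 2 (v ∘ e ∘ Sum.inl), WithLp.toLp 2 (v ∘ e ∘ Sum.inr), by
    ext i
    obtain ⟨s | s, rfl⟩ := e.surjective i <;> simp [blockVec]⟩

theorem norm_blockVec_sq [RCLike 𝕜] [Fintype ι] [Fintype κ] (x y : EuclideanSpace 𝕜 ι) :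
    ‖blockVec e x y‖ ^ 2 = ‖x‖ ^ 2 + ‖y‖ ^ 2 := by
  simp only [EuclideanSpace.norm_sq_eq, ← e.sum_comp, Fintype.sum_sum_type]
  simp [blockVec]

theorem toEuclideanLin_reindex_fromBlocks [RCLike 𝕜] [Fintype ι] [Fintype κ] [DecidableEq ι]
    [DecidableEq κ] (A B C D : Matrix ι ι 𝕜) (x y : EuclideanSpace 𝕜 ι) :
    toEuclideanLin (reindex e e (fromBlocks A B C D)) (blockVec e x y) =
      blockVec e (toEuclideanLin A x + toEuclideanLin B y)
        (toEuclideanLin C x + toEuclideanLin D y) := by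
  simp only [blockVec, toLpLin_apply, reindex_apply, submatrix_mulVec_equiv, Equiv.symm_symm,
    Function.comp_assoc, Equiv.symm_comp_self, Function.comp_id, fromBlocks_mulVec]
  ext i
  obtain ⟨s | s, rfl⟩ := e.surjective i <;> simp

theorem norm_toEuclideanLin_reindex_fromBlocks_le [RCLike 𝕜] [Fintype ι] [Fintype κ]
    [DecidableEq ι] [DecidableEq κ] {A B C D : Matrix ι ι 𝕜} {α β : ℝ}
    (hα : 0 ≤ α) (hβ : 0 ≤ β)
    (hA : ∀ z, ‖toEuclideanLin A z‖ ≤ α * ‖z‖) (hB : ∀ z, ‖toEuclideanLin B z‖ ≤ β * ‖z‖)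
    (hC : ∀ z, ‖toEuclideanLin C z‖ ≤ β * ‖z‖) (hD : ∀ z, ‖toEuclideanLin D z‖ ≤ α * ‖z‖)
    (v : EuclideanSpace 𝕜 κ) :
    ‖toEuclideanLin (reindex e e (fromBlocks A B C D)) v‖ ≤ (α + β) * ‖v‖ := by
  obtain ⟨x, y, rfl⟩ := exists_eq_blockVec e v
  rw [toEuclideanLin_reindex_fromBlocks, ← pow_le_pow_iff_left₀ (norm_nonneg _) (by positivity)
    two_ne_zero, mul_pow, norm_blockVec_sq, norm_blockVec_sq]
  have h₁ := (norm_add_le _ _).trans (add_le_add (hA x) (hB y))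
  have h₂ := (norm_add_le _ _).trans (add_le_add (hC x) (hD y))
  nlinarith [pow_le_pow_left₀ (norm_nonneg _) h₁ 2, pow_le_pow_left₀ (norm_nonneg _) h₂ 2,
    mul_nonneg (mul_nonneg hα hβ) (sq_nonneg (‖x‖ - ‖y‖))]

end BlockVectors

theorem reindex_fromBlocks_anticomm {R ι κ : Type*} [CommRing R] [Fintype ι] [Fintype κ]
    (e : ι ⊕ ι ≃ κ) {M U V V' : Matrix ι ι R} (a b ε : R) (hV : Commute V U)
    (hV' : Commute V' U) :
    reindex e e (fromBlocks M (a • V) (b • V') M) * reindex e e (fromBlocks U 0 0 (ε • U)) +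
        reindex e e (fromBlocks U 0 0 (ε • U)) * reindex e e (fromBlocks M (a • V) (b • V') M) =
      reindex e e (fromBlocks (M * U + U * M) ((a * (1 + ε)) • (V * U))
        ((b * (1 + ε)) • (V' * U)) (ε • (M * U + U * M))) := by
  have hblocks : fromBlocks M (a • V) (b • V') M * fromBlocks U 0 0 (ε • U) +
      fromBlocks U 0 0 (ε • U) * fromBlocks M (a • V) (b • V') M =
      fromBlocks (M * U + U * M) ((a * (1 + ε)) • (V * U)) ((b * (1 + ε)) • (V' * U))
        (ε • (M * U + U * M)) := by
    rw [fromBlocks_multiply, fromBlocks_multiply, fromBlocks_add, fromBlocks_inj]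
    refine ⟨by simp, ?_, ?_, ?_⟩
    · simp only [Matrix.smul_mul, Matrix.mul_smul, mul_zero, zero_mul, hV.eq]; module
    · simp only [Matrix.smul_mul, Matrix.mul_smul, mul_zero, zero_mul, hV'.eq]; module
    · simp only [Matrix.smul_mul, Matrix.mul_smul, mul_zero, zero_mul]; module
  rw [← hblocks]
  simp only [reindex_apply, submatrix_mul_equiv]
  rfl

theorem norm_toEuclideanLin_of_mem_unitaryGroup {𝕜 ι : Type*} [RCLike 𝕜] [Fintype ι]
    [DecidableEq ι] {U : Matrix ι ι 𝕜} (hU : U ∈ unitaryGroup ι 𝕜) (x : EuclideanSpace 𝕜 ι) :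
    ‖toEuclideanLin U x‖ = ‖x‖ :=
  ContinuousLinearMap.norm_map_of_mem_unitary
    (Unitary.map_mem (toEuclideanCLM (n := ι) (𝕜 := 𝕜)) hU) x

section LowerBound

open ComplexConjugate
open scoped InnerProductSpace

variable {𝕜 E : Type*} [RCLike 𝕜] [NormedAddCommGroup E] [InnerProductSpace 𝕜 E]

theorem le_norm_sq_add_norm_sq_of_norm_anticomm_le {M U U' : E →ₗ[𝕜] E} {c K : ℝ}
    (hM : M.IsSymmetric) (hUU' : ∀ x y, ⟪U' x, y⟫_𝕜 = ⟪x, U y⟫_𝕜)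
    (hU : ∀ y, ‖U y‖ = ‖y‖) (hU' : ∀ x, ‖U' x‖ = ‖x‖)
    (hK₀ : 0 ≤ K) (hK : ∀ y, ‖M (U y) + U (M y)‖ ≤ K * ‖y‖)
    (hc : ∀ z, c * ‖z‖ ^ 2 ≤ ‖M z‖ ^ 2) (a : 𝕜) (x y : E) :
    (c + ‖a‖ ^ 2 - ‖a‖ * K) * (‖x‖ ^ 2 + ‖y‖ ^ 2) ≤
      ‖M x + a • U y‖ ^ 2 + ‖conj a • U' x + M y‖ ^ 2 := by
  have hcross : ⟪M x, a • U y⟫_𝕜 + ⟪conj a • U' x, M y⟫_𝕜 = a * ⟪x, M (U y) + U (M y)⟫_𝕜 := by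
    rw [inner_smul_right, inner_smul_left, RCLike.conj_conj, hM, hUU', inner_add_right, mul_add]
  have hsize : ‖a * ⟪x, M (U y) + U (M y)⟫_𝕜‖ ≤ ‖a‖ * K * (‖x‖ * ‖y‖) := by
    rw [norm_mul, mul_assoc, mul_left_comm K]
    gcongr
    exact (norm_inner_le_norm (𝕜 := 𝕜) _ _).trans (by gcongr; exact hK y)
  have hre : -(‖a‖ * K * (‖x‖ * ‖y‖)) ≤
      RCLike.re ⟪M x, a • U y⟫_𝕜 + RCLike.re ⟪conj a • U' x, M y⟫_𝕜 := by
    rw [← map_add, hcross]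
    linarith [neg_abs_le (RCLike.re (a * ⟪x, M (U y) + U (M y)⟫_𝕜)),
      RCLike.abs_re_le_norm (a * ⟪x, M (U y) + U (M y)⟫_𝕜)]
  rw [norm_add_sq (𝕜 := 𝕜), norm_add_sq (𝕜 := 𝕜), norm_smul, norm_smul, hU, hU', RCLike.norm_conj]
  nlinarith [hc x, hc y, mul_nonneg (mul_nonneg (norm_nonneg a) hK₀) (sq_nonneg (‖x‖ - ‖y‖))]

end LowerBound

theorem Umat_succ (n : ℕ) (ξ : Fin (n + 1) → ℝ) :
    Umat (n + 1) ξ = reindex (finSumFinEquivPow n) (finSumFinEquivPow n)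
      (fromBlocks (Umat n fun j => ξ j.castSucc) 0 0
        (Complex.exp (Complex.I * (ξ (Fin.last n) : ℂ)) • Umat n fun j => ξ j.castSucc)) :=
  rfl

theorem Umat_zero (n : ℕ) : Umat n 0 = 1 := by
  induction n with
  | zero => rfl
  | succ n ih =>
    have ih' : (Umat n fun _ => 0) = 1 := ih
    simp [Umat_succ, ih']

theorem Umat_mul (n : ℕ) (ξ ζ : Fin n → ℝ) : Umat n ξ * Umat n ζ = Umat n (ξ + ζ) := by
  induction n with
  | zero => simp [Umat]
  | succ n ih =>
    have ih' : ((Umat n fun j => ξ j.castSucc) * Umat n fun j => ζ j.castSucc) =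
        Umat n fun j => ξ j.castSucc + ζ j.castSucc := ih _ _
    simp [Umat_succ, submatrix_mul_equiv, fromBlocks_multiply, ih', Complex.exp_add, mul_add,
      smul_smul, mul_comm]

theorem Umat_conjTranspose (n : ℕ) (ξ : Fin n → ℝ) : (Umat n ξ)ᴴ = Umat n (-ξ) := by
  induction n with
  | zero => simp [Umat]
  | succ n ih =>
    have ih' : (Umat n fun j => ξ j.castSucc)ᴴ = Umat n fun j => -ξ j.castSucc := ih _
    simp [Umat_succ, conjTranspose_submatrix, fromBlocks_conjTranspose, ih', ← Complex.exp_conj]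

theorem Umat_mem_unitaryGroup (n : ℕ) (ξ : Fin n → ℝ) :
    Umat n ξ ∈ unitaryGroup (Fin (2 ^ n)) ℂ := by
  rw [mem_unitaryGroup_iff, star_eq_conjTranspose, Umat_conjTranspose, Umat_mul, add_neg_cancel,
    Umat_zero]

theorem norm_toEuclideanLin_Umat (n : ℕ) (ξ : Fin n → ℝ) (x : EuclideanSpace ℂ (Fin (2 ^ n))) :
    ‖toEuclideanLin (Umat n ξ) x‖ = ‖x‖ :=
  norm_toEuclideanLin_of_mem_unitaryGroup (Umat_mem_unitaryGroup n ξ) x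

theorem Umat_commute (n : ℕ) (ξ ζ : Fin n → ℝ) : Commute (Umat n ξ) (Umat n ζ) := by
  rw [Commute, SemiconjBy, Umat_mul, Umat_mul, add_comm]

theorem norm_toEuclideanLin_smul_Umat (n : ℕ) (ξ : Fin n → ℝ) (c : ℂ)
    (x : EuclideanSpace ℂ (Fin (2 ^ n))) : ‖toEuclideanLin (c • Umat n ξ) x‖ = ‖c‖ * ‖x‖ := by
  rw [map_smul, LinearMap.smul_apply, norm_smul, norm_toEuclideanLin_Umat]

theorem Mmat_succ (n : ℕ) (a : Fin (n + 1) → ℂ) (γ : Fin (n + 1) → Fin (n + 1) → ℝ) :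
    Mmat (n + 1) a γ = reindex (finSumFinEquivPow n) (finSumFinEquivPow n)
      (fromBlocks
        (Mmat n (fun j => a j.castSucc) fun j k => γ j.castSucc k.castSucc)
        (a (Fin.last n) • Umat n fun j => γ j.castSucc (Fin.last n))
        ((starRingEnd ℂ) (a (Fin.last n)) • (Umat n fun j => γ j.castSucc (Fin.last n))ᴴ)
        (Mmat n (fun j => a j.castSucc) fun j k => γ j.castSucc k.castSucc)) :=
  rfl

theorem Mmat_isHermitian (n : ℕ) (a : Fin n → ℂ) (γ : Fin n → Fin n → ℝ) :
    (Mmat n a γ).IsHermitian := by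
  induction n with
  | zero => simp [Mmat, IsHermitian]
  | succ n ih =>
    rw [Mmat_succ, IsHermitian, reindex_apply, conjTranspose_submatrix, fromBlocks_conjTranspose,
      ih, conjTranspose_smul, conjTranspose_smul, conjTranspose_conjTranspose]
    simp

namespace Mmat

noncomputable def anticommBound {n : ℕ} (a : Fin n → ℂ) (ξ : Fin n → ℝ) : ℝ :=
  ∑ j, ‖1 + Complex.exp (Complex.I * (ξ j : ℂ))‖ * ‖a j‖

theorem anticommBound_nonneg {n : ℕ} (a : Fin n → ℂ) (ξ : Fin n → ℝ) : 0 ≤ anticommBound a ξ :=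
  Finset.sum_nonneg fun _ _ => by positivity

theorem norm_toEuclideanLin_anticomm_le (n : ℕ) (a : Fin n → ℂ) (γ : Fin n → Fin n → ℝ)
    (ξ : Fin n → ℝ) (w : EuclideanSpace ℂ (Fin (2 ^ n))) :
    ‖toEuclideanLin (Mmat n a γ * Umat n ξ + Umat n ξ * Mmat n a γ) w‖ ≤
      anticommBound a ξ * ‖w‖ := by
  induction n with
  | zero => simp [Mmat, anticommBound]
  | succ n ih =>
    have hε : ‖Complex.exp (Complex.I * (ξ (Fin.last n) : ℂ))‖ = 1 := by
      rw [mul_comm, Complex.norm_exp_ofReal_mul_I]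
    rw [Mmat_succ, Umat_succ, reindex_fromBlocks_anticomm _ _ _ _ (Umat_commute _ _ _)
      (Umat_conjTranspose n _ ▸ Umat_commute _ _ _), anticommBound, Fin.sum_univ_castSucc]
    refine norm_toEuclideanLin_reindex_fromBlocks_le _ (anticommBound_nonneg _ _) (by positivity)
      (ih _ _ _) (fun z => ?_) (fun z => ?_) (fun z => ?_) w
    · rw [Umat_mul, norm_toEuclideanLin_smul_Umat, norm_mul, mul_comm ‖_‖ ‖1 + _‖]
    · rw [Umat_conjTranspose, Umat_mul, norm_toEuclideanLin_smul_Umat, norm_mul,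
        Complex.norm_conj, mul_comm ‖_‖ ‖1 + _‖]
    · rw [map_smul, LinearMap.smul_apply, norm_smul, hε, one_mul]
      exact ih _ _ _ z

noncomputable def lowerBound {n : ℕ} (a : Fin n → ℂ) (γ : Fin n → Fin n → ℝ) : ℝ :=
  (∑ j, ‖a j‖ ^ 2) -
    ∑ m, ‖a m‖ *
      ∑ j, if j < m then ‖1 + Complex.exp (Complex.I * (γ j m : ℂ))‖ * ‖a j‖ else 0

theorem lowerBound_succ {n : ℕ} (a : Fin (n + 1) → ℂ) (γ : Fin (n + 1) → Fin (n + 1) → ℝ) :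
    lowerBound a γ =
      lowerBound (fun j => a j.castSucc) (fun j k => γ j.castSucc k.castSucc) +
        ‖a (Fin.last n)‖ ^ 2 -
        ‖a (Fin.last n)‖ *
          anticommBound (fun j => a j.castSucc) (fun j => γ j.castSucc (Fin.last n)) := by
  simp only [lowerBound, anticommBound, Fin.sum_univ_castSucc, Fin.castSucc_lt_castSucc_iff,
    Fin.castSucc_lt_last, (Fin.le_last _).not_gt, if_true, if_false, add_zero]
  ring

theorem lowerBound_mul_norm_sq_le (n : ℕ) (a : Fin n → ℂ) (γ : Fin n → Fin n → ℝ)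
    (v : EuclideanSpace ℂ (Fin (2 ^ n))) :
    lowerBound a γ * ‖v‖ ^ 2 ≤ ‖toEuclideanLin (Mmat n a γ) v‖ ^ 2 := by
  induction n with
  | zero => simp [lowerBound]
  | succ n ih =>
    obtain ⟨x, y, rfl⟩ := exists_eq_blockVec (finSumFinEquivPow n) v
    rw [Mmat_succ, toEuclideanLin_reindex_fromBlocks, norm_blockVec_sq, norm_blockVec_sq,
      lowerBound_succ]
    simp only [map_smul, LinearMap.smul_apply]
    refine le_norm_sq_add_norm_sq_of_norm_anticomm_le
      (isSymmetric_toEuclideanLin_iff.mpr (Mmat_isHermitian _ _ _)) (fun x y => ?_)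
      (norm_toEuclideanLin_Umat _ _) (fun x => by rw [Umat_conjTranspose, norm_toEuclideanLin_Umat])
      (anticommBound_nonneg _ _) (fun y => ?_) (ih _ _) _ x y
    · rw [toEuclideanLin_conjTranspose_eq_adjoint, LinearMap.adjoint_inner_left]
    · simpa using norm_toEuclideanLin_anticomm_le n _ _ _ y

theorem lowerBound_eq_ite (n : ℕ) (a : Fin n → ℂ) (γ : Fin n → Fin n → ℝ) :
    lowerBound a γ =
      (∑ j : Fin n, ‖a j‖ ^ 2) -
        (if 2 ≤ n then (1 : ℝ) else 0) *
          ∑ m : Fin n, ‖a m‖ * ∑ j : Fin n,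
            (if j < m then ‖1 + Complex.exp (Complex.I * (γ j m : ℂ))‖ * ‖a j‖ else 0) := by
  split_ifs with hn
  · rw [one_mul, lowerBound]
  · have : Subsingleton (Fin n) := Fin.subsingleton_iff_le_one.mpr (by omega)
    have hlt (j m : Fin n) : ¬j < m := by rw [Subsingleton.elim j m]; exact lt_irrefl m
    simp [lowerBound, hlt]

end Mmat

theorem Mmat_inf_sq_ge_general (n : ℕ) (a : Fin n → ℂ) (γ : Fin n → Fin n → ℝ) :
    (∑ j : Fin n, ‖a j‖ ^ 2) -
        (if 2 ≤ n then (1 : ℝ) else 0) *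
          ∑ m : Fin n, ‖a m‖ *
            ∑ j : Fin n,
              (if j < m then
                ‖1 + Complex.exp (Complex.I * (γ j m : ℂ))‖ * ‖a j‖
              else 0) ≤
      sInf {r : ℝ | ∃ v : EuclideanSpace ℂ (Fin (2 ^ n)),
        ‖v‖ = 1 ∧ r = ‖Matrix.toEuclideanLin (Mmat n a γ) v‖ ^ 2} := by
  rw [← Mmat.lowerBound_eq_ite]
  refine le_csInf ⟨_, EuclideanSpace.single 0 1, by simp, rfl⟩ ?_
  rintro r ⟨v, hv, rfl⟩
  simpa [hv] using Mmat.lowerBound_mul_norm_sq_le n a γ v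

/-- Lemma 2.2 (4), first form: a lower bound on
`inf_{‖v‖=1} ‖M_n((a_j),(γ_{j,k})) v‖²`. -/
theorem Mmat_inf_sq_ge (n : ℕ) (hn : 1 ≤ n) (a : Fin n → ℂ) (γ : Fin n → Fin n → ℝ) :
    (∑ j : Fin n, ‖a j‖ ^ 2) -
        (if 2 ≤ n then (1 : ℝ) else 0) *
          ∑ m : Fin n, ‖a m‖ *
            ∑ j : Fin n,
              (if j < m then
                ‖1 + Complex.exp (Complex.I * (γ j m : ℂ))‖ * ‖a j‖
              else 0) ≤
      sInf {r : ℝ | ∃ v : EuclideanSpace ℂ (Fin (2 ^ n)),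
        ‖v‖ = 1 ∧ r = ‖Matrix.toEuclideanLin (Mmat n a γ) v‖ ^ 2} :=
  Mmat_inf_sq_ge_general n a γ
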